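/- There exists c > 0 such that for all ω ∈ (0, 1/8], ⟨φ_ω, Λ_ω⟩ := ∫_ℝ φ_ω(x) Λ_ω(x) dx ≥ c √ω. -/

import Mathlib

/-!
Since `φ_s = √(φ_s²)`, we have `φ_ω Λ_ω = (ω / 2) ∂_ω (φ_ω²)`, so `⟨φ_ω, Λ_ω⟩` is `ω / 2` times the
derivative of the mass `∫ φ_s²`. The mass is elementary: the substitution `y = 2√s x` reduces it to
`∫ (1 + a cosh y)⁻¹ dy = 2 (log (1 + √(1 - a²)) - log a) / √(1 - a²)`, and with
`a = a_s = √(1 - 16 s / 3)` this gives `∫ φ_s² = √3 (log (1 + 4√s / √3) - log a_s)`.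
Differentiating under the integral sign is justified by `|∂_s φ_s²(x)| ≲ exp (-√s₁ |x|)` for `s`
in a compact subinterval `[s₁, s₂]` of `(0, 3/16)`. Comparing the two derivatives gives
`⟨φ_ω, Λ_ω⟩ = √ω / a_ω² ≥ √ω`.
-/

open Real MeasureTheory

/-- The solitary-wave profile of the cubic–quintic NLS. -/
noncomputable def phi (ω x : ℝ) : ℝ :=
  Real.sqrt (4 * ω / (1 + Real.sqrt (1 - 16 * ω / 3) * Real.cosh (2 * Real.sqrt ω * x)))

/-- Λ_ω = ω ∂φ_ω/∂ω. -/
noncomputable def Lam (ω x : ℝ) : ℝ := ω * deriv (fun s : ℝ => phi s x) ω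

open Set Filter Topology

theorem integrable_comp_abs_of_integrableOn_Ioi {E : Type*} [NormedAddCommGroup E]
    {f : ℝ → E} (hf : IntegrableOn f (Ioi 0)) : Integrable fun x ↦ f |x| := by
  have hIci : Integrable ((Ici 0).indicator f) :=
    (integrable_indicator_iff measurableSet_Ici).2
      (Iff.mpr integrableOn_Ici_iff_integrableOn_Ioi hf)
  have hIoi : Integrable ((Ioi 0).indicator f) :=
    (integrable_indicator_iff measurableSet_Ioi).2 hf
  refine (hIci.add hIoi.comp_neg).congr (ae_of_all _ fun x ↦ ?_)
  rcases le_or_gt 0 x with hx | hx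
  · simp [hx, abs_of_nonneg hx]
  · simp [hx.not_ge, hx, abs_of_neg hx]

theorem integrable_exp_neg_mul_abs {γ : ℝ} (hγ : 0 < γ) :
    Integrable fun x ↦ exp (-(γ * |x|)) := by
  simpa only [neg_mul] using
    integrable_comp_abs_of_integrableOn_Ioi (exp_neg_integrableOn_Ioi 0 hγ)

theorem exp_abs_le_two_mul_cosh (y : ℝ) : exp |y| ≤ 2 * cosh y := by
  rw [← cosh_abs, cosh_eq]
  linarith [exp_pos (-|y|)]

section InvOneAddMulCosh

variable {a c : ℝ}

-- `log ((a + cosh x + c * sinh x) / (1 + a * cosh x)) / c`, written in `exp (-x)` so that the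
-- limit at `+∞` can be read off.
noncomputable def coshPrimitive (a c x : ℝ) : ℝ :=
  (log (1 + c + 2 * a * exp (-x) + (1 - c) * exp (-x) ^ 2) -
    log (a + 2 * exp (-x) + a * exp (-x) ^ 2)) / c

theorem hasDerivAt_coshPrimitive (ha : 0 < a) (hc : 0 < c) (hac : a ^ 2 + c ^ 2 = 1) (x : ℝ) :
    HasDerivAt (coshPrimitive a c) (1 + a * cosh x)⁻¹ x := by
  have hc1 : c < 1 := by nlinarith
  set E := exp (-x) with hE
  have hE0 : 0 < E := exp_pos _
  have hc1' : 0 < 1 - c := by linarith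
  have hEd : HasDerivAt (fun x ↦ exp (-x)) (-E) x := by
    simpa using (hasDerivAt_neg x).exp
  have hNpos : 0 < 1 + c + 2 * a * E + (1 - c) * E ^ 2 := by
    nlinarith [mul_pos hc1' (pow_pos hE0 2), mul_pos ha hE0]
  have hDpos : 0 < a + 2 * E + a * E ^ 2 := by positivity
  have hN := (((hEd.const_mul (2 * a)).const_add (1 + c)).add
    ((hEd.pow 2).const_mul (1 - c))).log hNpos.ne'
  have hD := (((hEd.const_mul 2).const_add a).add ((hEd.pow 2).const_mul a)).log hDpos.ne'
  refine ((hN.sub hD).div_const c).congr_deriv ?_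
  have hcosh : cosh x = (E⁻¹ + E) / 2 := by rw [cosh_eq, hE, exp_neg, inv_inv]
  simp only [Pi.add_apply, Pi.pow_apply, ← hE]
  rw [hcosh]
  field_simp
  norm_num
  linear_combination (a + 2 * E + a * E ^ 2) * (2 * E ^ 2 - 2) * hac

theorem coshPrimitive_zero : coshPrimitive a c 0 = 0 := by
  simp only [coshPrimitive, neg_zero, exp_zero]
  ring_nf

theorem tendsto_coshPrimitive_atTop (ha : 0 < a) (hc : 0 < c) :
    Tendsto (coshPrimitive a c) atTop (𝓝 ((log (1 + c) - log a) / c)) := by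
  have hlim : ContinuousAt (fun E : ℝ ↦ (log (1 + c + 2 * a * E + (1 - c) * E ^ 2) -
      log (a + 2 * E + a * E ^ 2)) / c) 0 := by
    fun_prop (disch := simp; positivity)
  convert hlim.tendsto.comp tendsto_exp_neg_atTop_nhds_zero using 2
  · rfl
  · simp

theorem integrableOn_Ioi_inv_one_add_mul_cosh (ha : 0 < a) (hc : 0 < c)
    (hac : a ^ 2 + c ^ 2 = 1) : IntegrableOn (fun x ↦ (1 + a * cosh x)⁻¹) (Ioi 0) :=
  integrableOn_Ioi_deriv_of_nonneg' (fun x _ ↦ hasDerivAt_coshPrimitive ha hc hac x)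
    (fun x _ ↦ by positivity) (tendsto_coshPrimitive_atTop ha hc)

theorem integral_Ioi_inv_one_add_mul_cosh (ha : 0 < a) (hc : 0 < c) (hac : a ^ 2 + c ^ 2 = 1) :
    ∫ x in Ioi 0, (1 + a * cosh x)⁻¹ = (log (1 + c) - log a) / c := by
  rw [integral_Ioi_of_hasDerivAt_of_nonneg' (fun x _ ↦ hasDerivAt_coshPrimitive ha hc hac x)
    (fun x _ ↦ by positivity) (tendsto_coshPrimitive_atTop ha hc), coshPrimitive_zero, sub_zero]

theorem integrable_inv_one_add_mul_cosh (ha : 0 < a) (ha1 : a < 1) :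
    Integrable fun x ↦ (1 + a * cosh x)⁻¹ := by
  have hc : 0 < √(1 - a ^ 2) := sqrt_pos.2 (by nlinarith)
  have hac : a ^ 2 + √(1 - a ^ 2) ^ 2 = 1 := by rw [sq_sqrt (by nlinarith)]; ring
  simpa only [cosh_abs] using
    integrable_comp_abs_of_integrableOn_Ioi (integrableOn_Ioi_inv_one_add_mul_cosh ha hc hac)

theorem integral_inv_one_add_mul_cosh (ha : 0 < a) (ha1 : a < 1) :
    ∫ x, (1 + a * cosh x)⁻¹ = 2 * (log (1 + √(1 - a ^ 2)) - log a) / √(1 - a ^ 2) := by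
  have hc : 0 < √(1 - a ^ 2) := sqrt_pos.2 (by nlinarith)
  have hac : a ^ 2 + √(1 - a ^ 2) ^ 2 = 1 := by rw [sq_sqrt (by nlinarith)]; ring
  have h := integral_comp_abs (f := fun x ↦ (1 + a * cosh x)⁻¹)
  simp only [cosh_abs] at h
  rw [h, integral_Ioi_inv_one_add_mul_cosh ha hc hac, mul_div_assoc]

end InvOneAddMulCosh

section Soliton

variable {s : ℝ}

noncomputable def coshCoeff (s : ℝ) : ℝ := √(1 - 16 * s / 3)

noncomputable def phiSqDen (s x : ℝ) : ℝ := 1 + coshCoeff s * cosh (2 * √s * x)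

noncomputable def phiSqDenDeriv (s x : ℝ) : ℝ :=
  -8 / (3 * coshCoeff s) * cosh (2 * √s * x) + coshCoeff s * sinh (2 * √s * x) * (x / √s)

noncomputable def phiSq (s x : ℝ) : ℝ := 4 * s / phiSqDen s x

noncomputable def phiSqDeriv (s x : ℝ) : ℝ :=
  phiSq s x * (1 / s - phiSqDenDeriv s x / phiSqDen s x)

theorem phi_eq_sqrt_phiSq (s x : ℝ) : phi s x = √(phiSq s x) := rfl

theorem coshCoeff_pos (hs : s < 3 / 16) : 0 < coshCoeff s := sqrt_pos.2 (by linarith)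

theorem coshCoeff_sq (hs : s < 3 / 16) : coshCoeff s ^ 2 = 1 - 16 * s / 3 :=
  sq_sqrt (by linarith)

theorem coshCoeff_lt_one (hs : 0 < s) : coshCoeff s < 1 :=
  (sqrt_lt' one_pos).2 (by linarith)

theorem antitone_coshCoeff : Antitone coshCoeff :=
  fun _ _ hst ↦ sqrt_le_sqrt (by linarith)

theorem hasDerivAt_coshCoeff (hs : s < 3 / 16) :
    HasDerivAt coshCoeff (-8 / (3 * coshCoeff s)) s := by
  have h := (((hasDerivAt_id' s).const_mul (16 : ℝ)).div_const 3).const_sub 1 |>.sqrt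
    (by linarith)
  refine h.congr_deriv ?_
  rw [coshCoeff]
  ring

theorem phiSqDen_pos (s x : ℝ) : 0 < phiSqDen s x := by
  have : 0 ≤ coshCoeff s := sqrt_nonneg _
  unfold phiSqDen
  positivity

theorem hasDerivAt_phiSqDen (hs0 : 0 < s) (hs : s < 3 / 16) (x : ℝ) :
    HasDerivAt (phiSqDen · x) (phiSqDenDeriv s x) s := by
  have hu : HasDerivAt (fun t ↦ 2 * √t * x) (x / √s) s := by
    refine (((hasDerivAt_sqrt hs0.ne').const_mul 2).mul_const x).congr_deriv ?_
    field_simp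
  have hcosh := (hasDerivAt_cosh _).comp s hu
  refine (((hasDerivAt_coshCoeff hs).mul hcosh).const_add 1).congr_deriv ?_
  simp only [Function.comp_apply, phiSqDenDeriv]
  ring

theorem hasDerivAt_phiSq (hs0 : 0 < s) (hs : s < 3 / 16) (x : ℝ) :
    HasDerivAt (phiSq · x) (phiSqDeriv s x) s := by
  refine (((hasDerivAt_id' s).const_mul 4).div (hasDerivAt_phiSqDen hs0 hs x)
    (phiSqDen_pos s x).ne').congr_deriv ?_
  have := (phiSqDen_pos s x).ne'
  unfold phiSqDeriv phiSq
  field_simp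

theorem phi_mul_Lam (hs0 : 0 < s) (hs : s < 3 / 16) (x : ℝ) :
    phi s x * Lam s x = s / 2 * phiSqDeriv s x := by
  have hpos : 0 < phiSq s x := div_pos (by linarith) (phiSqDen_pos s x)
  have hsqrt : 0 < √(phiSq s x) := sqrt_pos.2 hpos
  have hderiv : HasDerivAt (phi · x) (phiSqDeriv s x / (2 * √(phiSq s x))) s :=
    (hasDerivAt_phiSq hs0 hs x).sqrt hpos.ne'
  rw [Lam, hderiv.deriv, phi_eq_sqrt_phiSq]
  field_simp

theorem phiSq_eq_mul_inv (s x : ℝ) :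
    phiSq s x = 4 * s * (1 + coshCoeff s * cosh (2 * √s * x))⁻¹ := div_eq_mul_inv _ _

theorem integrable_phiSq (hs0 : 0 < s) (hs : s < 3 / 16) : Integrable (phiSq s) := by
  have h := ((integrable_inv_one_add_mul_cosh (coshCoeff_pos hs)
    (coshCoeff_lt_one hs0)).comp_mul_left' (by positivity : 2 * √s ≠ 0)).const_mul (4 * s)
  simpa only [← phiSq_eq_mul_inv] using h

theorem sqrt_one_sub_coshCoeff_sq (hs0 : 0 < s) (hs : s < 3 / 16) :
    √(1 - coshCoeff s ^ 2) = 4 * √s / √3 := by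
  have h : 1 - coshCoeff s ^ 2 = (4 * √s / √3) ^ 2 := by
    rw [coshCoeff_sq hs, div_pow, mul_pow, sq_sqrt hs0.le, sq_sqrt (by norm_num)]
    ring
  rw [h, sqrt_sq (by positivity)]

theorem integral_phiSq (hs0 : 0 < s) (hs : s < 3 / 16) :
    ∫ x, phiSq s x = √3 * (log (1 + 4 * √s / √3) - log (coshCoeff s)) := by
  have ha := coshCoeff_pos hs
  simp only [phiSq_eq_mul_inv]
  rw [integral_const_mul, Measure.integral_comp_mul_left (fun y ↦ (1 + coshCoeff s * cosh y)⁻¹),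
    integral_inv_one_add_mul_cosh ha (coshCoeff_lt_one hs0), sqrt_one_sub_coshCoeff_sq hs0 hs,
    abs_of_pos (by positivity), smul_eq_mul]
  have hs' : √s ^ 2 = s := sq_sqrt hs0.le
  have : 0 < √s := sqrt_pos.2 hs0
  generalize log (1 + 4 * √s / √3) - log (coshCoeff s) = L
  field_simp
  linear_combination -L * hs'

theorem hasDerivAt_integral_phiSq_explicit (hs0 : 0 < s) (hs : s < 3 / 16) :
    HasDerivAt (fun t ↦ ∫ x, phiSq t x) (2 / (√s * coshCoeff s ^ 2)) s := by
  have ha := coshCoeff_pos hs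
  have hc : HasDerivAt (fun t ↦ 1 + 4 * √t / √3) (4 * (1 / (2 * √s)) / √3) s :=
    (((hasDerivAt_sqrt hs0.ne').const_mul 4).div_const _).const_add 1
  have hclosed := ((hc.log (by positivity)).sub ((hasDerivAt_coshCoeff hs).log ha.ne')).const_mul √3
  refine (hclosed.congr_deriv ?_).congr_of_eventuallyEq ?_
  · have h3 : √3 ^ 2 = 3 := sq_sqrt (by norm_num)
    have hs' : √s ^ 2 = s := sq_sqrt hs0.le
    have := coshCoeff_sq hs
    field_simp
    linear_combination 12 * √3 * this + 16 * √s * h3 + 64 * √3 * hs'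
  · filter_upwards [Ioo_mem_nhds hs0 hs] with t ht using integral_phiSq ht.1 ht.2

theorem abs_phiSqDenDeriv_le (hs0 : 0 < s) (hs : s < 3 / 16) (x : ℝ) :
    |phiSqDenDeriv s x| ≤ (8 / (3 * coshCoeff s ^ 2) + |x| / √s) * phiSqDen s x := by
  set u := 2 * √s * x
  have ha := coshCoeff_pos hs
  have hC := cosh_pos u
  have hsinh : |sinh u| ≤ cosh u := by
    rw [abs_sinh, ← cosh_abs u]
    exact (sinh_lt_cosh _).le
  have haC : coshCoeff s * cosh u ≤ phiSqDen s x := by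
    unfold phiSqDen
    linarith
  calc |phiSqDenDeriv s x|
      ≤ 8 / (3 * coshCoeff s) * cosh u + coshCoeff s * cosh u * (|x| / √s) := by
        refine (abs_add_le _ _).trans (add_le_add (le_of_eq ?_) ?_)
        · rw [abs_mul, abs_div, abs_of_pos hC, abs_of_pos (by positivity : 0 < 3 * coshCoeff s)]
          norm_num
        · rw [abs_mul, abs_mul, abs_div, abs_of_pos ha, abs_of_pos (sqrt_pos.2 hs0)]
          gcongr
    _ = 8 / (3 * coshCoeff s ^ 2) * (coshCoeff s * cosh u) +
          |x| / √s * (coshCoeff s * cosh u) := by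
        field_simp
    _ ≤ (8 / (3 * coshCoeff s ^ 2) + |x| / √s) * phiSqDen s x := by
        rw [add_mul]
        gcongr

theorem abs_phiSqDeriv_le (hs0 : 0 < s) (hs : s < 3 / 16) (x : ℝ) :
    |phiSqDeriv s x| ≤ phiSq s x * (1 / s + 8 / (3 * coshCoeff s ^ 2) + |x| / √s) := by
  have hD := phiSqDen_pos s x
  have hP : 0 < phiSq s x := div_pos (by linarith) hD
  have hratio : |phiSqDenDeriv s x / phiSqDen s x| ≤ 8 / (3 * coshCoeff s ^ 2) + |x| / √s := by
    rw [abs_div, abs_of_pos hD, div_le_iff₀ hD]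
    exact abs_phiSqDenDeriv_le hs0 hs x
  rw [phiSqDeriv, abs_mul, abs_of_pos hP, add_assoc]
  gcongr
  refine (abs_sub _ _).trans ?_
  rw [abs_of_pos (one_div_pos.2 hs0)]
  gcongr

theorem phiSq_le_exp (hs0 : 0 < s) (hs : s < 3 / 16) (x : ℝ) :
    phiSq s x ≤ 8 * s / coshCoeff s * exp (-(2 * √s * |x|)) := by
  have ha := coshCoeff_pos hs
  have habs : |2 * √s * x| = 2 * √s * |x| := by
    rw [abs_mul, abs_of_pos (by positivity : 0 < 2 * √s)]
  have hden : coshCoeff s * (exp (2 * √s * |x|) / 2) ≤ phiSqDen s x := by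
    have := exp_abs_le_two_mul_cosh (2 * √s * x)
    rw [habs] at this
    unfold phiSqDen
    nlinarith
  calc phiSq s x ≤ 4 * s / (coshCoeff s * (exp (2 * √s * |x|) / 2)) := by
        unfold phiSq
        gcongr
    _ = 8 * s / coshCoeff s * exp (-(2 * √s * |x|)) := by
        rw [exp_neg]
        field_simp
        ring

theorem abs_phiSqDeriv_le_exp (hs0 : 0 < s) (hs : s < 3 / 16) (x : ℝ) :
    |phiSqDeriv s x| ≤
      8 / coshCoeff s * (2 + s * (8 / (3 * coshCoeff s ^ 2))) * exp (-(√s * |x|)) := by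
  have hE2 : exp (-(2 * √s * |x|)) = exp (-(√s * |x|)) * exp (-(√s * |x|)) := by
    rw [← exp_add]
    ring_nf
  have hst : s * (|x| / √s) = √s * |x| := by
    have := sq_sqrt hs0.le
    field_simp
    linear_combination -|x| * this
  set K := 8 / (3 * coshCoeff s ^ 2)
  set t := √s * |x|
  have ha := coshCoeff_pos hs
  have ht : 0 ≤ t := by positivity
  have hE1 : exp (-t) ≤ 1 := exp_le_one_iff.2 (by linarith)
  have htE : t * exp (-t) ≤ 1 := by
    rw [exp_neg, ← div_eq_mul_inv, div_le_one (exp_pos t)]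
    linarith [add_one_le_exp t]
  calc |phiSqDeriv s x| ≤ phiSq s x * (1 / s + K + |x| / √s) := abs_phiSqDeriv_le hs0 hs x
    _ ≤ 8 * s / coshCoeff s * exp (-(2 * √s * |x|)) * (1 / s + K + |x| / √s) := by
        gcongr
        exact phiSq_le_exp hs0 hs x
    _ = 8 / coshCoeff s * (exp (-t) + s * K * exp (-t) + t * exp (-t)) * exp (-t) := by
        rw [hE2, ← hst]
        field_simp
    _ ≤ 8 / coshCoeff s * (2 + s * K) * exp (-t) := by
        have := mul_le_mul_of_nonneg_left hE1 (by positivity : 0 ≤ s * K)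
        gcongr 8 / coshCoeff s * ?_ * exp (-t)
        linarith

theorem abs_phiSqDeriv_le_of_mem_Icc {s₁ s₂ : ℝ} (hs₁ : 0 < s₁) (hs₂ : s₂ < 3 / 16)
    (hs : s ∈ Icc s₁ s₂) (x : ℝ) :
    |phiSqDeriv s x| ≤
      8 / coshCoeff s₂ * (2 + s₂ * (8 / (3 * coshCoeff s₂ ^ 2))) * exp (-(√s₁ * |x|)) := by
  obtain ⟨h₁, h₂⟩ := hs
  have hs0 : 0 < s := by linarith
  have hs₂0 : 0 < s₂ := by linarith
  have ha₂ := coshCoeff_pos hs₂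
  have ha := antitone_coshCoeff h₂
  have := sqrt_le_sqrt h₁
  refine (abs_phiSqDeriv_le_exp hs0 (by linarith) x).trans ?_
  gcongr

theorem hasDerivAt_integral_phiSq (hs0 : 0 < s) (hs : s < 3 / 16) :
    HasDerivAt (fun t ↦ ∫ x, phiSq t x) (∫ x, phiSqDeriv s x) s := by
  have hs₁ : 0 < s / 2 := by linarith
  have hs₂ : (s + 3 / 16) / 2 < 3 / 16 := by linarith
  have hmeas : Measurable (phiSqDeriv s) := by
    unfold phiSqDeriv phiSq phiSqDen phiSqDenDeriv
    fun_prop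
  refine (hasDerivAt_integral_of_dominated_loc_of_deriv_le
    (Icc_mem_nhds (by linarith : s / 2 < s) (by linarith : s < (s + 3 / 16) / 2))
    ?_ (integrable_phiSq hs0 hs) hmeas.aestronglyMeasurable
    (ae_of_all _ fun x t ht ↦ abs_phiSqDeriv_le_of_mem_Icc hs₁ hs₂ ht x)
    ((integrable_exp_neg_mul_abs (sqrt_pos.2 hs₁)).const_mul _)
    (ae_of_all _ fun x t ht ↦ hasDerivAt_phiSq (by linarith [ht.1]) (by linarith [ht.2]) x)).2
  filter_upwards [Ioo_mem_nhds hs0 hs] with t ht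
  exact (integrable_phiSq ht.1 ht.2).aestronglyMeasurable

theorem integral_phiSqDeriv (hs0 : 0 < s) (hs : s < 3 / 16) :
    ∫ x, phiSqDeriv s x = 2 / (√s * coshCoeff s ^ 2) :=
  (hasDerivAt_integral_phiSq hs0 hs).unique (hasDerivAt_integral_phiSq_explicit hs0 hs)

theorem integral_phi_mul_Lam (hs0 : 0 < s) (hs : s < 3 / 16) :
    ∫ x, phi s x * Lam s x = √s / coshCoeff s ^ 2 := by
  simp only [phi_mul_Lam hs0 hs]
  rw [integral_const_mul, integral_phiSqDeriv hs0 hs]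
  have hs' : √s ^ 2 = s := sq_sqrt hs0.le
  have := sqrt_pos.2 hs0
  have := coshCoeff_pos hs
  field_simp
  linear_combination -hs'

end Soliton

theorem stmt_3 :
    ∃ c : ℝ, 0 < c ∧
      ∀ ω ∈ Set.Ioc (0 : ℝ) (1 / 8),
        c * Real.sqrt ω ≤ ∫ x : ℝ, phi ω x * Lam ω x := by
  refine ⟨1, one_pos, fun ω ⟨hω0, hω⟩ ↦ ?_⟩
  have hω' : ω < 3 / 16 := by linarith
  rw [integral_phi_mul_Lam hω0 hω', one_mul]
  exact le_div_self (sqrt_nonneg ω) (pow_pos (coshCoeff_pos hω') 2)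
    (by rw [coshCoeff_sq hω']; linarith)
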